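/- arXiv:1010.5577 — 2 statements merged into one kernel-verified Lean document; each statement's English description precedes it below -/
import Mathlib

section
/- Let Σ = (ρ; M_1,…,M_n) be a test on a finite-dimensional complex Hilbert space H, let E_1,…,E_n be events with E_i defined by M_i for each i, let K be a subsequence of (n] with K < i ≤ n, and let J be a subsequence of K, with Pr_Σ[𝔼_K] ≠ 0 and Pr_Σ[𝔼_{K∖J}] ≠ 0. If Ind_Σ(E_i | 𝔼_J; 𝔼_{K∖J}) holds, then Ind_Σ(Ē_i | 𝔼_J; 𝔼_{K∖J}) holds, where Ē_i is the complement of E_i. -/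
open Matrix Finset
open scoped ComplexOrder

/-- A quantum measurement on `ℂ^d`: a finite family of operators indexed by the
outcomes in `spec`, satisfying the completeness condition `∑ Mₘ† Mₘ = I`. -/
structure Measurement (d : ℕ) where
  spec : Finset ℕ
  op : ℕ → Matrix (Fin d) (Fin d) ℂ
  complete : ∑ m ∈ spec, (op m)ᴴ * op m = 1

/-- An event `{M ∈ A}`: a measurement together with a subset of its spectrum. -/
structure QEvent (d : ℕ) where
  meas : Measurement d
  A : Finset ℕ
  sub : A ⊆ meas.spec

/-- The super-operator defined by an event: `ρ ↦ ∑_{m ∈ A} Mₘ ρ Mₘ†`. -/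
noncomputable def QEvent.superop {d : ℕ} (E : QEvent d) (ρ : Matrix (Fin d) (Fin d) ℂ) :
    Matrix (Fin d) (Fin d) ℂ :=
  ∑ m ∈ E.A, E.meas.op m * ρ * (E.meas.op m)ᴴ

/-- The probability of a sequence of events in state `ρ`:
`Pr_ρ[E₁,…,E_k] = tr(𝓔_k(⋯𝓔₁(ρ)⋯))`. -/
noncomputable def PrSeq {d : ℕ} (ρ : Matrix (Fin d) (Fin d) ℂ) (Es : List (QEvent d)) : ℝ :=
  (Matrix.trace (Es.foldl (fun σ E => E.superop σ) ρ)).re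

/-- A density operator: positive semidefinite with trace one. -/
def IsDensityOp {d : ℕ} (ρ : Matrix (Fin d) (Fin d) ℂ) : Prop :=
  ρ.PosSemidef ∧ ρ.trace = 1

/-- A projective measurement: every operator is an orthogonal projection and
distinct operators are orthogonal. -/
def Measurement.IsProjective {d : ℕ} (M : Measurement d) : Prop :=
  (∀ m ∈ M.spec, (M.op m)ᴴ = M.op m ∧ M.op m * M.op m = M.op m) ∧
  ∀ m ∈ M.spec, ∀ m' ∈ M.spec, m ≠ m' → M.op m * M.op m' = 0

/-- The complete event `I_M = {M ∈ spec(M)}`. -/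
def completeEvent {d : ℕ} (M : Measurement d) : QEvent d :=
  ⟨M, M.spec, subset_rfl⟩

/-- The complement `Ē = {M ∈ spec(M) \ A}` of the event `E = {M ∈ A}`. -/
def QEvent.compl {d : ℕ} (E : QEvent d) : QEvent d :=
  ⟨E.meas, E.meas.spec \ E.A, Finset.sdiff_subset⟩

/-- Conditional probability `Pr_ρ[𝔽|𝔼] = Pr_ρ[𝔼,𝔽] / Pr_ρ[𝔼]`. -/
noncomputable def condPrSeq {d : ℕ} (ρ : Matrix (Fin d) (Fin d) ℂ) (Fs Es : List (QEvent d)) : ℝ :=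
  PrSeq ρ (Es ++ Fs) / PrSeq ρ Es

/-- The list of events realizing `Pr_Σ[𝔼_K]` in the test `Σ = (ρ; M₁,…,M_n)`:
all measurements `M₁,…,M_{max K}` are performed; at the indices `i ∈ K` the event
`E i` is used, while at the remaining indices the complete event `I_{M_i}` is used. -/
noncomputable def testList {d : ℕ} (n : ℕ) (Ms : ℕ → Measurement d) (E : ℕ → QEvent d)
    (K : Finset ℕ) : List (QEvent d) :=
  ((List.range' 1 n).filter (fun i => decide (∃ k ∈ K, i ≤ k))).map
    (fun i => if i ∈ K then E i else completeEvent (Ms i))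

/-- The probability `Pr_Σ[𝔼_K]` of the subsequence of events indexed by `K` in the
test `Σ = (ρ; M₁,…,M_n)`. -/
noncomputable def PrTest {d : ℕ} (ρ : Matrix (Fin d) (Fin d) ℂ) (n : ℕ)
    (Ms : ℕ → Measurement d) (E : ℕ → QEvent d) (K : Finset ℕ) : ℝ :=
  PrSeq ρ (testList n Ms E K)

/-- The conditional probability `Pr_Σ[𝔼_L | 𝔼_K]` in a test (for `K < L`, the
concatenation `𝔼_K,𝔼_L` is the subsequence indexed by `K ∪ L`). -/
noncomputable def condPrTest {d : ℕ} (ρ : Matrix (Fin d) (Fin d) ℂ) (n : ℕ)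
    (Ms : ℕ → Measurement d) (E : ℕ → QEvent d) (L K : Finset ℕ) : ℝ :=
  PrTest ρ n Ms E (K ∪ L) / PrTest ρ n Ms E K

/-- Independence `Ind_Σ(E_i | 𝔼_J; 𝔼_{K∖J})`: `Pr_Σ[E_i|𝔼_K] = Pr_Σ[E_i|𝔼_{K∖J}]`. -/
def IndTest {d : ℕ} (ρ : Matrix (Fin d) (Fin d) ℂ) (n : ℕ)
    (Ms : ℕ → Measurement d) (E : ℕ → QEvent d) (i : ℕ) (J K : Finset ℕ) : Prop :=
  condPrTest ρ n Ms E {i} K = condPrTest ρ n Ms E {i} (K \ J)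

/-- Negative independence `NInd_Σ(E_i | 𝔼_K)`: `Pr_Σ[E_i | Ē_K] = Pr_Σ[E_i]`,
where in the conditioning sequence every event of `𝔼_K` is replaced by its complement. -/
def NIndTest {d : ℕ} (ρ : Matrix (Fin d) (Fin d) ℂ) (n : ℕ)
    (Ms : ℕ → Measurement d) (E : ℕ → QEvent d) (i : ℕ) (K : Finset ℕ) : Prop :=
  condPrTest ρ n Ms (Function.update (fun k => (E k).compl) i (E i)) {i} K
    = PrTest ρ n Ms E {i}

/-- `NInd_{Σ,𝔼}(k|l)`: `NInd_Σ(E_k | E₁,…,E_j)` for all `1 ≤ j ≤ l`. -/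
def NIndSeq {d : ℕ} (ρ : Matrix (Fin d) (Fin d) ℂ) (n : ℕ)
    (Ms : ℕ → Measurement d) (E : ℕ → QEvent d) (k l : ℕ) : Prop :=
  ∀ j, 1 ≤ j → j ≤ l → NIndTest ρ n Ms E k (Finset.Icc 1 j)

/-!
For `S < i`, the state just before step `i` is the same whether `E_i` or `Ē_i` is observed
there, and the Kraus operators of `E_i` and `Ē_i` together satisfy the completeness relation,
so `Pr_Σ[𝔼_S, Ē_i] = Pr_Σ[𝔼_S] - Pr_Σ[𝔼_S, E_i]`; trailing complete events do not change a
probability, so `Pr_Σ[𝔼_S]` is the trace of that state. Hence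
`Pr_Σ[Ē_i | 𝔼_S] = 1 - Pr_Σ[E_i | 𝔼_S]` whenever `Pr_Σ[𝔼_S] ≠ 0`, and an equality of
conditional probabilities of `E_i` (for `S = K` and `S = K ∖ J`) transfers to `Ē_i`.
-/

open Function

section

variable {d : ℕ}

lemma Measurement.sum_trace_mul (M : Measurement d) (σ : Matrix (Fin d) (Fin d) ℂ) :
    ∑ m ∈ M.spec, ((M.op m)ᴴ * M.op m * σ).trace = σ.trace := by
  rw [← trace_sum, ← sum_mul, M.complete, one_mul]

namespace QEvent

lemma trace_superop (E : QEvent d) (σ : Matrix (Fin d) (Fin d) ℂ) :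
    (E.superop σ).trace = ∑ m ∈ E.A, ((E.meas.op m)ᴴ * E.meas.op m * σ).trace := by
  rw [superop, trace_sum]
  exact sum_congr rfl fun m _ => trace_mul_cycle _ _ _

lemma trace_superop_add_compl (E : QEvent d) (σ : Matrix (Fin d) (Fin d) ℂ) :
    (E.superop σ).trace + (E.compl.superop σ).trace = σ.trace := by
  rw [trace_superop, trace_superop]
  change _ + ∑ m ∈ E.meas.spec \ E.A, ((E.meas.op m)ᴴ * E.meas.op m * σ).trace = _
  rw [← sum_union disjoint_sdiff]
  exact (union_sdiff_of_subset E.sub).symm ▸ E.meas.sum_trace_mul σ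

end QEvent

lemma trace_superop_completeEvent (M : Measurement d) (σ : Matrix (Fin d) (Fin d) ℂ) :
    ((completeEvent M).superop σ).trace = σ.trace :=
  (QEvent.trace_superop _ σ).trans (M.sum_trace_mul σ)

lemma trace_foldl_map_completeEvent (Ms : List (Measurement d))
    (σ : Matrix (Fin d) (Fin d) ℂ) :
    ((Ms.map completeEvent).foldl (fun σ E => E.superop σ) σ).trace = σ.trace := by
  induction Ms generalizing σ with
  | nil => rfl
  | cons M Ms ih => rw [List.map_cons, List.foldl_cons, ih, trace_superop_completeEvent]

lemma PrSeq_append_map_completeEvent (ρ : Matrix (Fin d) (Fin d) ℂ) (L : List (QEvent d))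
    (Ms : List (Measurement d)) :
    PrSeq ρ (L ++ Ms.map completeEvent) = PrSeq ρ L := by
  rw [PrSeq, List.foldl_append, trace_foldl_map_completeEvent, PrSeq]

lemma PrSeq_concat_compl (ρ : Matrix (Fin d) (Fin d) ℂ) (L : List (QEvent d)) (E : QEvent d) :
    PrSeq ρ (L ++ [E.compl]) = PrSeq ρ L - PrSeq ρ (L ++ [E]) := by
  simp only [PrSeq, List.foldl_append, List.foldl_cons, List.foldl_nil]
  rw [← Complex.sub_re, ← E.trace_superop_add_compl (L.foldl (fun σ E => E.superop σ) ρ),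
    add_sub_cancel_left]

lemma List.filter_range'_eq_range' {s n m : ℕ} (hm : m ≤ n) (p : ℕ → Bool)
    (hp : ∀ j ∈ List.range' s n, p j ↔ j < s + m) :
    (List.range' s n).filter p = List.range' s m := by
  have hsplit := (List.range'_append_1 (s := s) (m := m) (n := n - m)).symm
  rw [Nat.add_sub_cancel' hm] at hsplit
  rw [hsplit, List.filter_append, List.filter_eq_self.2, List.filter_eq_nil_iff.2,
    List.append_nil]
  · intro j hj
    rw [hp j (hsplit ▸ List.mem_append_right _ hj)]
    simp only [List.mem_range'_1] at hj
    omega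
  · intro j hj
    rw [hp j (hsplit ▸ List.mem_append_left _ hj)]
    simp only [List.mem_range'_1] at hj
    omega

/-- The event `E′_j` performed at step `j` when computing `Pr_Σ[𝔼_S]`. -/
def testEvent (Ms : ℕ → Measurement d) (F : ℕ → QEvent d) (S : Finset ℕ) (j : ℕ) :
    QEvent d :=
  if j ∈ S then F j else completeEvent (Ms j)

lemma testEvent_update_of_notMem (Ms : ℕ → Measurement d) (F : ℕ → QEvent d)
    {S : Finset ℕ} {i : ℕ} (hi : i ∉ S) (X : QEvent d) :
    testEvent Ms (update F i X) S = testEvent Ms F S := by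
  funext j
  unfold testEvent
  split_ifs with hj
  · exact update_of_ne (ne_of_mem_of_not_mem hj hi) _ _
  · rfl

lemma testList_eq_map_range' (n : ℕ) (Ms : ℕ → Measurement d) (F : ℕ → QEvent d)
    (S : Finset ℕ) {m : ℕ} (hm : m ≤ n) (hS : ∀ j, 1 ≤ j → ((∃ k ∈ S, j ≤ k) ↔ j ≤ m)) :
    testList n Ms F S = (List.range' 1 m).map (testEvent Ms F S) := by
  unfold testList
  rw [List.filter_range'_eq_range' hm]
  · rfl
  intro j hj
  rw [List.mem_range'_1] at hj
  simpa [Nat.lt_one_add_iff] using hS j hj.1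

lemma testList_eq_map_range'_sup (n : ℕ) (Ms : ℕ → Measurement d) (F : ℕ → QEvent d)
    {S : Finset ℕ} (hS : S.sup id ≤ n) :
    testList n Ms F S = (List.range' 1 (S.sup id)).map (testEvent Ms F S) :=
  testList_eq_map_range' n Ms F S hS fun _ hj => (Finset.le_sup_iff hj).symm

section PrTest

variable (ρ : Matrix (Fin d) (Fin d) ℂ) {n : ℕ} (Ms : ℕ → Measurement d) (F : ℕ → QEvent d)
  {S : Finset ℕ} {m : ℕ}

lemma PrTest_eq_PrSeq_range' (hS : ∀ k ∈ S, k ≤ m) (hm : m ≤ n) :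
    PrTest ρ n Ms F S = PrSeq ρ ((List.range' 1 m).map (testEvent Ms F S)) := by
  have hsup : S.sup id ≤ m := Finset.sup_le hS
  have hsplit := (List.range'_append_1 (s := 1) (m := S.sup id) (n := m - S.sup id)).symm
  rw [Nat.add_sub_cancel' hsup] at hsplit
  have htail : (List.range' (1 + S.sup id) (m - S.sup id)).map (testEvent Ms F S)
      = ((List.range' (1 + S.sup id) (m - S.sup id)).map Ms).map completeEvent := by
    rw [List.map_map]
    refine List.map_congr_left fun j hj => if_neg fun hjS => ?_
    have := Finset.le_sup (f := id) hjS
    simp only [List.mem_range'_1, id] at hj this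
    omega
  rw [PrTest, testList_eq_map_range'_sup n Ms F (hsup.trans hm), hsplit, List.map_append, htail,
    PrSeq_append_map_completeEvent]

lemma PrTest_union_singleton (hS : ∀ k ∈ S, k ≤ m) (hm : m + 1 ≤ n) :
    PrTest ρ n Ms F (S ∪ {m + 1})
      = PrSeq ρ ((List.range' 1 m).map (testEvent Ms F S) ++ [F (m + 1)]) := by
  have hle : ∀ j, 1 ≤ j → ((∃ k ∈ S ∪ {m + 1}, j ≤ k) ↔ j ≤ m + 1) := fun j _ =>
    ⟨fun ⟨k, hk, hjk⟩ => by
      rcases Finset.mem_union.1 hk with hk | hk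
      · exact hjk.trans (hS k hk).step
      · exact hjk.trans (Finset.mem_singleton.1 hk).le,
     fun hj => ⟨m + 1, Finset.mem_union_right _ (Finset.mem_singleton_self _), hj⟩⟩
  rw [PrTest, testList_eq_map_range' n Ms F _ hm hle, List.range'_1_concat, List.map_append,
    List.map_singleton, add_comm 1 m]
  congr 2
  · refine List.map_congr_left fun j hj => ?_
    have hjm : j ≠ m + 1 := by rw [List.mem_range'_1] at hj; omega
    simp only [testEvent, Finset.mem_union, Finset.mem_singleton, hjm, or_false]
  · simp [testEvent]

lemma PrTest_update_of_notMem {i : ℕ} (hi : i ∉ S) (X : QEvent d) :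
    PrTest ρ n Ms (update F i X) S = PrTest ρ n Ms F S :=
  congrArg (fun f => PrSeq ρ (List.map f _)) (testEvent_update_of_notMem Ms F hi X)

lemma condPrTest_update_compl (hS : ∀ k ∈ S, k ≤ m) (hm : m + 1 ≤ n)
    (h0 : PrTest ρ n Ms F S ≠ 0) :
    condPrTest ρ n Ms (update F (m + 1) (F (m + 1)).compl) {m + 1} S
      = 1 - condPrTest ρ n Ms F {m + 1} S := by
  have hnot : m + 1 ∉ S := fun h => by have := hS _ h; omega
  rw [condPrTest, condPrTest, PrTest_update_of_notMem ρ Ms F hnot,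
    PrTest_union_singleton ρ Ms _ hS hm, PrTest_union_singleton ρ Ms F hS hm,
    testEvent_update_of_notMem Ms F hnot, update_self, PrSeq_concat_compl,
    ← PrTest_eq_PrSeq_range' ρ Ms F hS (Nat.le_of_succ_le hm), ← PrTest_union_singleton ρ Ms F hS hm,
    sub_div, div_self h0]

end PrTest

end

theorem indTest_compl_general {d : ℕ} (ρ : Matrix (Fin d) (Fin d) ℂ)
    (n : ℕ) (Ms : ℕ → Measurement d) (E : ℕ → QEvent d)
    (K : Finset ℕ)
    (i : ℕ) (hi : i ∈ Finset.Icc 1 n) (hKi : ∀ k ∈ K, k < i)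
    (J : Finset ℕ)
    (hne : PrTest ρ n Ms E K ≠ 0) (hne' : PrTest ρ n Ms E (K \ J) ≠ 0)
    (hind : IndTest ρ n Ms E i J K) :
    IndTest ρ n Ms (Function.update E i (E i).compl) i J K := by
  obtain ⟨hi1, hin⟩ := Finset.mem_Icc.1 hi
  obtain ⟨m, rfl⟩ := Nat.exists_eq_add_of_le' hi1
  have hK : ∀ k ∈ K, k ≤ m := fun k hk => Nat.lt_succ_iff.1 (hKi k hk)
  have hKJ : ∀ k ∈ K \ J, k ≤ m := fun k hk => hK k (Finset.sdiff_subset hk)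
  unfold IndTest at hind ⊢
  rw [condPrTest_update_compl ρ Ms E hK hin hne, condPrTest_update_compl ρ Ms E hKJ hin hne',
    hind]

/-- Proposition 4.2: if `Ind_Σ(E_i | 𝔼_J; 𝔼_{K∖J})`, then
`Ind_Σ(Ē_i | 𝔼_J; 𝔼_{K∖J})`. -/
theorem indTest_compl {d : ℕ} (ρ : Matrix (Fin d) (Fin d) ℂ) (hρ : IsDensityOp ρ)
    (n : ℕ) (Ms : ℕ → Measurement d) (E : ℕ → QEvent d)
    (hE : ∀ k ∈ Finset.Icc 1 n, (E k).meas = Ms k)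
    (K : Finset ℕ) (hK : K ⊆ Finset.Icc 1 n)
    (i : ℕ) (hi : i ∈ Finset.Icc 1 n) (hKi : ∀ k ∈ K, k < i)
    (J : Finset ℕ) (hJ : J ⊆ K)
    (hne : PrTest ρ n Ms E K ≠ 0) (hne' : PrTest ρ n Ms E (K \ J) ≠ 0)
    (hind : IndTest ρ n Ms E i J K) :
    IndTest ρ n Ms (Function.update E i (E i).compl) i J K :=
  indTest_compl_general ρ n Ms E K i hi hKi J hne hne' hind
end

section
/- (Symmetric Quantum Lovász Local Lemma) Let Σ = (ρ; M_1,…,M_n) be a test on a finite-dimensional complex Hilbert space H, let 𝔼 = E_1,…,E_n be events with E_i defined by M_i for each i, and let d be a dependence radius of the sequence E_1,…,E_n in Σ. Assume Pr_Σ[Ē_1,…,Ē_{i−1}] ≠ 0 for each 1 ≤ i ≤ n. If Pr_Σ[E_i] ≤ p for all 1 ≤ i ≤ n and p · e · (d+1) ≤ 1 (where e is Euler's number), then Pr_Σ[Ē_1,…,Ē_n] > 0. -/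
open Matrix Finset
open scoped ComplexOrder

/-!
Write `P j = Pr_Σ[Ē₁, …, Ē_j]`. Then `P k - P (k+1) = Pr_Σ[Ē₁, …, Ē_k, E_{k+1}]`, and forgetting
the outcomes of the measurements `M_{m+1}, …, M_k` with `m = k - d` bounds this by
`Pr_Σ[Ē₁, …, Ē_m, E_{k+1}] = Pr_Σ[E_{k+1}] · P m ≤ p · P m`, the equality being negative
independence. Pick `x < 1` with `p ≤ x (1-x)^d` (`x = 1/(d+1)`, or `1/e` if `d = 0`, as
`p e (d+1) ≤ 1`). By induction `P (k+1) ≥ (1-x) P k`: the induction hypothesis gives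
`P k ≥ (1-x)^d P m`, so `P k - P (k+1) ≤ x P k`. Hence `P n ≥ (1-x)^n > 0`.
-/

open scoped MatrixOrder

namespace QEvent

variable {d : ℕ}

instance : Preorder (QEvent d) where
  le E F := E.meas = F.meas ∧ E.A ⊆ F.A
  le_refl _ := ⟨rfl, subset_rfl⟩
  le_trans _ _ _ h₁ h₂ := ⟨h₁.1.trans h₂.1, h₁.2.trans h₂.2⟩

lemma le_completeEvent (E : QEvent d) : E ≤ completeEvent E.meas := ⟨rfl, E.sub⟩

lemma superop_nonneg (E : QEvent d) {σ : Matrix (Fin d) (Fin d) ℂ} (hσ : 0 ≤ σ) :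
    0 ≤ E.superop σ :=
  Finset.sum_nonneg fun m _ => star_right_conjugate_nonneg hσ (E.meas.op m)

lemma superop_mono (E : QEvent d) : Monotone E.superop := fun _ _ h =>
  Finset.sum_le_sum fun m _ => star_right_conjugate_le_conjugate h (E.meas.op m)

lemma superop_le_superop {E F : QEvent d} (hEF : E ≤ F) {σ : Matrix (Fin d) (Fin d) ℂ}
    (hσ : 0 ≤ σ) : E.superop σ ≤ F.superop σ := by
  obtain ⟨hmeas, hA⟩ := hEF
  rw [superop, superop, hmeas, ← Finset.sum_sdiff hA]
  exact le_add_of_nonneg_left (Finset.sum_nonneg fun m _ => star_right_conjugate_nonneg hσ _)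

lemma trace_superop_compl_add (E : QEvent d) (σ : Matrix (Fin d) (Fin d) ℂ) :
    (E.compl.superop σ).trace + (E.superop σ).trace = σ.trace := by
  simp only [superop, compl, trace_sum, trace_mul_cycle _ σ]
  rw [Finset.sum_sdiff E.sub, ← trace_sum, ← Finset.sum_mul, E.meas.complete, one_mul]

end QEvent

section PostState

variable {d : ℕ}

noncomputable def postState (σ : Matrix (Fin d) (Fin d) ℂ) (Es : List (QEvent d)) :
    Matrix (Fin d) (Fin d) ℂ :=
  Es.foldl (fun τ E => E.superop τ) σ

lemma postState_nonneg {σ : Matrix (Fin d) (Fin d) ℂ} (hσ : 0 ≤ σ) (Es : List (QEvent d)) :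
    0 ≤ postState σ Es := by
  induction Es generalizing σ with
  | nil => exact hσ
  | cons E Es ih => exact ih (E.superop_nonneg hσ)

lemma postState_mono {Es Fs : List (QEvent d)} (h : List.Forall₂ (· ≤ ·) Es Fs)
    {σ τ : Matrix (Fin d) (Fin d) ℂ} (hσ : 0 ≤ σ) (hστ : σ ≤ τ) :
    postState σ Es ≤ postState τ Fs := by
  induction h generalizing σ τ with
  | nil => exact hστ
  | cons hEF _ ih =>
    exact ih (QEvent.superop_nonneg _ hσ)
      ((QEvent.superop_mono _ hστ).trans (QEvent.superop_le_superop hEF (hσ.trans hστ)))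

lemma re_trace_mono {σ τ : Matrix (Fin d) (Fin d) ℂ} (h : σ ≤ τ) : σ.trace.re ≤ τ.trace.re := by
  have := (le_iff.mp h).trace_nonneg
  rw [trace_sub, sub_nonneg] at this
  exact (Complex.le_def.mp this).1

lemma PrSeq_mono {ρ : Matrix (Fin d) (Fin d) ℂ} (hρ : 0 ≤ ρ) {Es Fs : List (QEvent d)}
    (h : List.Forall₂ (· ≤ ·) Es Fs) : PrSeq ρ Es ≤ PrSeq ρ Fs :=
  re_trace_mono (postState_mono h hρ le_rfl)

lemma PrSeq_append_compl_add (ρ : Matrix (Fin d) (Fin d) ℂ) (Es : List (QEvent d))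
    (E : QEvent d) : PrSeq ρ (Es ++ [E.compl]) + PrSeq ρ (Es ++ [E]) = PrSeq ρ Es := by
  simpa only [PrSeq, postState, List.foldl_append, List.foldl_cons, List.foldl_nil, Complex.add_re]
    using congrArg Complex.re (E.trace_superop_compl_add (postState ρ Es))

end PostState

section TestList

variable {d n : ℕ} (Ms : ℕ → Measurement d)

lemma testList_congr {G G' : ℕ → QEvent d} {K : Finset ℕ} (h : ∀ i ∈ K, G i = G' i) :
    testList n Ms G K = testList n Ms G' K :=
  List.map_congr_left fun i _ => by by_cases hi : i ∈ K <;> simp [hi, h]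

/-- `hK` says that `k` is the largest element of `K` (or `0` if `K = ∅`). -/
lemma testList_eq_map_range'_s19 (G : ℕ → QEvent d) {K : Finset ℕ} {k : ℕ} (hkn : k ≤ n)
    (hK : ∀ i, 1 ≤ i → ((∃ j ∈ K, i ≤ j) ↔ i ≤ k)) :
    testList n Ms G K
      = (List.range' 1 k).map fun i => if i ∈ K then G i else completeEvent (Ms i) := by
  obtain ⟨r, rfl⟩ := Nat.exists_eq_add_of_le hkn
  rw [testList, ← List.range'_append_1, List.filter_append, List.filter_eq_self.mpr,
    List.filter_eq_nil_iff.mpr, List.append_nil]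
  · intro i hi
    have hi' := List.mem_range'_1.mp hi
    simpa only [decide_eq_true_eq, hK i (by omega)] using (show ¬ i ≤ k by omega)
  · intro i hi
    have hi' := List.mem_range'_1.mp hi
    simpa only [decide_eq_true_eq, hK i hi'.1] using (show i ≤ k by omega)

lemma testList_Icc (G : ℕ → QEvent d) {k : ℕ} (hkn : k ≤ n) :
    testList n Ms G (Finset.Icc 1 k) = (List.range' 1 k).map G := by
  rw [testList_eq_map_range'_s19 Ms G hkn fun i hi =>
    ⟨fun ⟨j, hj, hij⟩ => hij.trans (Finset.mem_Icc.mp hj).2,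
      fun hik => ⟨k, Finset.mem_Icc.mpr ⟨hi.trans hik, le_rfl⟩, hik⟩⟩]
  exact List.map_congr_left fun i hi =>
    if_pos (Finset.mem_Icc.mpr (by have := List.mem_range'_1.mp hi; omega))

lemma testList_Icc_union_singleton (G : ℕ → QEvent d) {m k : ℕ} (hmk : m ≤ k)
    (hkn : k + 1 ≤ n) :
    testList n Ms G (Finset.Icc 1 m ∪ {k + 1})
      = (List.range' 1 k).map (fun i => if i ≤ m then G i else completeEvent (Ms i))
        ++ [G (k + 1)] := by
  have hK : ∀ i, 1 ≤ i → ((∃ j ∈ Finset.Icc 1 m ∪ {k + 1}, i ≤ j) ↔ i ≤ k + 1) := fun i _ =>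
    ⟨fun ⟨j, hj, hij⟩ => by simp only [Finset.mem_union, Finset.mem_Icc,
      Finset.mem_singleton] at hj; omega, fun hik => ⟨k + 1, by simp, hik⟩⟩
  rw [testList_eq_map_range'_s19 Ms G hkn hK, List.range'_1_concat, List.map_append,
    List.map_singleton, add_comm 1 k, if_pos (by simp)]
  congr 1
  refine List.map_congr_left fun i hi => ?_
  have hi' := List.mem_range'_1.mp hi
  by_cases him : i ≤ m
  · rw [if_pos (by simp only [Finset.mem_union, Finset.mem_Icc]; omega), if_pos him]
  · rw [if_neg (by simp only [Finset.mem_union, Finset.mem_Icc, Finset.mem_singleton]; omega),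
      if_neg him]

end TestList

section Recurrence

variable {P : ℕ → ℝ} {c : ℝ}

lemma pow_sub_mul_le_of_forall_lt (hc : 0 ≤ c) {k : ℕ} (h : ∀ j < k, c * P j ≤ P (j + 1))
    {i : ℕ} (hik : i ≤ k) : c ^ (k - i) * P i ≤ P k := by
  induction k, hik using Nat.le_induction with
  | base => simp
  | succ k hik ih =>
    calc c ^ (k + 1 - i) * P i = c * (c ^ (k - i) * P i) := by
          rw [Nat.sub_add_comm hik, pow_succ']; ring
      _ ≤ c * P k := mul_le_mul_of_nonneg_left (ih fun j hj => h j (by omega)) hc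
      _ ≤ P (k + 1) := h k (by omega)

variable {n d : ℕ} {p x : ℝ}

lemma one_sub_mul_le_succ_of_sub_succ_le (hP0 : 0 < P 0) (hx0 : 0 ≤ x) (hx1 : x < 1)
    (hpx : p ≤ x * (1 - x) ^ d)
    (hdrop : ∀ k < n, ∃ m ≤ k, k ≤ m + d ∧ (0 < P m → P k - P (k + 1) ≤ p * P m)) :
    ∀ k < n, (1 - x) * P k ≤ P (k + 1) := by
  have hc : 0 ≤ 1 - x := by linarith
  intro k
  induction k using Nat.strong_induction_on with
  | _ k ih =>
  intro hk
  replace ih : ∀ j < k, (1 - x) * P j ≤ P (j + 1) := fun j hj => ih j hj (by omega)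
  obtain ⟨m, hmk, hkm, hdrop⟩ := hdrop k hk
  have hm : 0 < P m := lt_of_lt_of_le (mul_pos (pow_pos (by linarith) _) hP0)
    (pow_sub_mul_le_of_forall_lt hc (fun j hj => ih j (by omega)) (Nat.zero_le m))
  have hchain : (1 - x) ^ d * P m ≤ P k :=
    calc (1 - x) ^ d * P m ≤ (1 - x) ^ (k - m) * P m :=
          mul_le_mul_of_nonneg_right (pow_le_pow_of_le_one hc (by linarith) (by omega)) hm.le
      _ ≤ P k := pow_sub_mul_le_of_forall_lt hc ih hmk
  nlinarith [hdrop hm, mul_le_mul_of_nonneg_right hpx hm.le,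
    mul_le_mul_of_nonneg_left hchain hx0]

lemma pos_of_sub_succ_le (hP0 : 0 < P 0) (hx0 : 0 ≤ x) (hx1 : x < 1)
    (hpx : p ≤ x * (1 - x) ^ d)
    (hdrop : ∀ k < n, ∃ m ≤ k, k ≤ m + d ∧ (0 < P m → P k - P (k + 1) ≤ p * P m)) :
    0 < P n :=
  lt_of_lt_of_le (mul_pos (pow_pos (by linarith) _) hP0)
    (pow_sub_mul_le_of_forall_lt (by linarith)
      (one_sub_mul_le_succ_of_sub_succ_le hP0 hx0 hx1 hpx hdrop) (Nat.zero_le n))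

end Recurrence

lemma exists_le_mul_one_sub_pow {p : ℝ} {d : ℕ} (h : p * Real.exp 1 * (d + 1) ≤ 1) :
    ∃ x : ℝ, 0 ≤ x ∧ x < 1 ∧ p ≤ x * (1 - x) ^ d := by
  have he : 1 < Real.exp 1 := Real.one_lt_exp_iff.mpr one_pos
  have hp : p ≤ 1 / (Real.exp 1 * (d + 1)) := by
    rw [le_div_iff₀ (by positivity), ← mul_assoc]; exact h
  rcases Nat.eq_zero_or_pos d with rfl | hd
  · exact ⟨(Real.exp 1)⁻¹, by positivity, inv_lt_one_of_one_lt₀ he, by simpa using hp⟩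
  -- `x = 1/(d+1)` maximises `x (1-x)^d`, and `(1 + 1/d)^d ≤ e`
  refine ⟨((d : ℝ) + 1)⁻¹, by positivity, inv_lt_one_of_one_lt₀ (by simp [hd]), ?_⟩
  have hx : 1 - ((d : ℝ) + 1)⁻¹ = (1 + (d : ℝ)⁻¹)⁻¹ := by field_simp; ring
  rw [hx, inv_pow, ← mul_inv, ← one_div]
  refine hp.trans (one_div_le_one_div_of_le (by positivity) ?_)
  rw [mul_comm]
  exact mul_le_mul_of_nonneg_right Real.one_add_inv_pow_le_exp (by positivity)

section Avoidance

variable {d n : ℕ} {ρ : Matrix (Fin d) (Fin d) ℂ} {Ms : ℕ → Measurement d} {E : ℕ → QEvent d}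

noncomputable def avoidProb (ρ : Matrix (Fin d) (Fin d) ℂ) (n : ℕ) (Ms : ℕ → Measurement d)
    (E : ℕ → QEvent d) (j : ℕ) : ℝ :=
  PrTest ρ n Ms (fun k => (E k).compl) (Finset.Icc 1 j)

lemma avoidProb_zero (hρ : ρ.trace = 1) : avoidProb ρ n Ms E 0 = 1 := by
  rw [avoidProb, PrTest, testList_Icc Ms _ (Nat.zero_le n)]
  simp [PrSeq, hρ]

lemma avoidProb_sub_succ {k : ℕ} (hkn : k + 1 ≤ n) :
    avoidProb ρ n Ms E k - avoidProb ρ n Ms E (k + 1)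
      = PrSeq ρ ((List.range' 1 k).map (fun i => (E i).compl) ++ [E (k + 1)]) := by
  rw [avoidProb, avoidProb, PrTest, PrTest, testList_Icc Ms _ (by omega), testList_Icc Ms _ hkn,
    List.range'_1_concat, List.map_append, List.map_singleton, add_comm 1 k,
    ← PrSeq_append_compl_add ρ _ (E (k + 1))]
  ring

/-- Forgetting the outcomes of the measurements `M_{m+1}, …, M_k` (replacing `Ē_i` by the complete
event `I_{M_i}`) can only increase the probability. -/
lemma avoidProb_sub_succ_le_PrTest (hρ : 0 ≤ ρ) (hE : ∀ i ∈ Finset.Icc 1 n, (E i).meas = Ms i)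
    {m k : ℕ} (hmk : m ≤ k) (hkn : k + 1 ≤ n) :
    avoidProb ρ n Ms E k - avoidProb ρ n Ms E (k + 1)
      ≤ PrTest ρ n Ms (Function.update (fun i => (E i).compl) (k + 1) (E (k + 1)))
          (Finset.Icc 1 m ∪ {k + 1}) := by
  rw [avoidProb_sub_succ hkn, PrTest, testList_Icc_union_singleton Ms _ hmk hkn,
    Function.update_self]
  refine PrSeq_mono hρ (List.rel_append ?_ (List.Forall₂.cons le_rfl .nil))
  rw [List.forall₂_map_left_iff, List.forall₂_map_right_iff, List.forall₂_same]
  intro i hi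
  have hi' := List.mem_range'_1.mp hi
  split_ifs
  · rw [Function.update_of_ne (by omega)]
  · rw [← hE i (Finset.mem_Icc.mpr ⟨hi'.1, by omega⟩)]
    exact (E i).compl.le_completeEvent

/-- The dependence radius makes `E_{k+1}` negatively independent of `E₁, …, E_m` for
`m = k - d₀ ≥ 1`, which factors the right-hand side of `avoidProb_sub_succ_le_PrTest` as
`Pr[E_{k+1}] · Pr[Ē₁, …, Ē_m]`. -/
lemma avoidProb_sub_succ_le {d₀ k : ℕ} {p : ℝ} (hρ : IsDensityOp ρ)
    (hE : ∀ i ∈ Finset.Icc 1 n, (E i).meas = Ms i)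
    (hrad : ∀ l k : ℕ, 1 ≤ l → l < k → k ≤ n → ¬ NIndSeq ρ n Ms E k l → k ≤ l + d₀)
    (hp : ∀ i ∈ Finset.Icc 1 n, PrTest ρ n Ms E {i} ≤ p) (hkn : k < n)
    (hpos : 0 < avoidProb ρ n Ms E (k - d₀)) :
    avoidProb ρ n Ms E k - avoidProb ρ n Ms E (k + 1) ≤ p * avoidProb ρ n Ms E (k - d₀) := by
  have hpk : PrTest ρ n Ms E {k + 1} ≤ p := hp (k + 1) (Finset.mem_Icc.mpr ⟨by omega, hkn⟩)
  refine (avoidProb_sub_succ_le_PrTest hρ.1.nonneg hE (Nat.sub_le k d₀) hkn).trans ?_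
  rcases Nat.eq_zero_or_pos (k - d₀) with hm | hm
  · rw [hm, avoidProb_zero hρ.2, mul_one, Finset.Icc_eq_empty_of_lt one_pos, Finset.empty_union,
      PrTest, testList_congr Ms fun i hi => by
        rw [Finset.mem_singleton.mp hi, Function.update_self]]
    exact hpk
  have hind : NIndTest ρ n Ms E (k + 1) (Finset.Icc 1 (k - d₀)) := by
    by_contra h
    have := hrad (k - d₀) (k + 1) hm (by omega) hkn (fun hs => h (hs _ hm le_rfl))
    omega
  have hcond : PrTest ρ n Ms (Function.update (fun i => (E i).compl) (k + 1) (E (k + 1)))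
      (Finset.Icc 1 (k - d₀)) = avoidProb ρ n Ms E (k - d₀) :=
    congrArg (PrSeq ρ) (testList_congr Ms fun i hi =>
      Function.update_of_ne (by have := Finset.mem_Icc.mp hi; omega) _ _)
  rw [NIndTest, condPrTest, hcond, div_eq_iff hpos.ne'] at hind
  rw [hind]
  exact mul_le_mul_of_nonneg_right hpk hpos.le

end Avoidance

theorem symmetric_quantum_lll_general {d : ℕ} (ρ : Matrix (Fin d) (Fin d) ℂ)
    (hρ : IsDensityOp ρ) (n : ℕ) (Ms : ℕ → Measurement d) (E : ℕ → QEvent d)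
    (hE : ∀ k ∈ Finset.Icc 1 n, (E k).meas = Ms k)
    (d₀ : ℕ)
    (hrad : ∀ l k : ℕ, 1 ≤ l → l < k → k ≤ n →
      ¬ NIndSeq ρ n Ms E k l → k ≤ l + d₀)
    (p : ℝ) (hp : ∀ i ∈ Finset.Icc 1 n, PrTest ρ n Ms E {i} ≤ p)
    (hpe : p * Real.exp 1 * (d₀ + 1) ≤ 1) :
    0 < PrTest ρ n Ms (fun k => (E k).compl) (Finset.Icc 1 n) := by
  obtain ⟨x, hx0, hx1, hpx⟩ := exists_le_mul_one_sub_pow hpe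
  refine pos_of_sub_succ_le (P := avoidProb ρ n Ms E)
    (avoidProb_zero hρ.2 ▸ one_pos) hx0 hx1 hpx fun k hk => ?_
  exact ⟨k - d₀, Nat.sub_le k d₀, by omega, avoidProb_sub_succ_le hρ hE hrad hp hk⟩

/-- Symmetric Quantum Lovász Local Lemma: if `d₀` is a dependence
radius of `E₁,…,E_n` in `Σ` (i.e. `NDep_{Σ,𝔼}(k|l)` implies `l ≥ k − d₀`),
`Pr_Σ[E_i] ≤ p` for all `1 ≤ i ≤ n`, `p · e · (d₀+1) ≤ 1`, and
`Pr_Σ[Ē₁,…,Ē_{i−1}] ≠ 0` for each `1 ≤ i ≤ n`, then `Pr_Σ[Ē₁,…,Ē_n] > 0`. -/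
theorem symmetric_quantum_lll {d : ℕ} (ρ : Matrix (Fin d) (Fin d) ℂ)
    (hρ : IsDensityOp ρ) (n : ℕ) (Ms : ℕ → Measurement d) (E : ℕ → QEvent d)
    (hE : ∀ k ∈ Finset.Icc 1 n, (E k).meas = Ms k)
    (d₀ : ℕ)
    (hrad : ∀ l k : ℕ, 1 ≤ l → l < k → k ≤ n →
      ¬ NIndSeq ρ n Ms E k l → k ≤ l + d₀)
    (p : ℝ) (hp : ∀ i ∈ Finset.Icc 1 n, PrTest ρ n Ms E {i} ≤ p)
    (hpe : p * Real.exp 1 * (d₀ + 1) ≤ 1)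
    (hne : ∀ i ∈ Finset.Icc 1 n,
      PrTest ρ n Ms (fun k => (E k).compl) (Finset.Ico 1 i) ≠ 0) :
    0 < PrTest ρ n Ms (fun k => (E k).compl) (Finset.Icc 1 n) :=
  symmetric_quantum_lll_general ρ hρ n Ms E hE d₀ hrad p hp hpe
end
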